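/- If y ∈ ℤ[φ] lies in [0, 2−φ) ∪ [4−2φ, 2φ−2) ∪ [φ, 2), then N(R(y)) < N(y)/2 + 8. -/

import Mathlib

/-!
Since `φ³ = 2φ + 1`, multiplication by `φ³` acts on the coordinates of `m + nφ` as the matrix
`(m, n) ↦ (m + 2n, 2m + 3n)`, and on the expansion intervals `R(y) = φ³y - 2kφ` with `k ∈ {0, 1, 2}`.
The new coordinates can be written as `m + 2n = y + n(2 - φ)` and `2m + 3n - 2k = 2y - 2k + n(3 - 2φ)`,
where `y ∈ [0, 2)` and both `2 - φ` and `|3 - 2φ|` are below `1/2`.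
-/

open Set

noncomputable section

/-- The golden ratio `(1+√5)/2`. -/
def gold : ℝ := (1 + Real.sqrt 5) / 2

/-- The renormalization map `R` on `[0,2)`. -/
def Rmap (y : ℝ) : ℝ :=
  if y < 2 - gold then gold ^ 3 * y
  else if y < 4 - 2 * gold then y + 2 * gold - 2
  else if y < 2 * gold - 2 then gold ^ 3 * y - 2 * gold
  else if y < gold then y - 2 * gold + 2
  else gold ^ 3 * y - 4 * gold

lemma gold_sq : gold ^ 2 = gold + 1 := Real.goldenRatio_sq

lemma one_lt_gold : 1 < gold := Real.one_lt_goldenRatio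

lemma three_halves_lt_gold : 3 / 2 < gold := by
  nlinarith [gold_sq, one_lt_gold]

lemma gold_lt_seven_quarters : gold < 7 / 4 := by
  nlinarith [gold_sq, one_lt_gold]

lemma gold_pow_three : gold ^ 3 = 2 * gold + 1 := by
  linear_combination (gold + 1) * gold_sq

lemma gold_pow_three_mul (m n : ℤ) :
    gold ^ 3 * (m + n * gold) = (m + 2 * n : ℤ) + (2 * m + 3 * n : ℤ) * gold := by
  push_cast
  linear_combination (m + n * gold) * gold_pow_three + 2 * n * gold_sq

lemma abs_mul_two_sub_gold_le (x : ℝ) : |x * (2 - gold)| ≤ |x| / 2 := by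
  rw [abs_mul, abs_of_pos (by linarith [gold_lt_seven_quarters] : (0 : ℝ) < 2 - gold)]
  nlinarith [abs_nonneg x, three_halves_lt_gold]

lemma abs_mul_three_sub_two_gold_le (x : ℝ) : |x * (3 - 2 * gold)| ≤ |x| / 2 := by
  rw [abs_mul]
  have : |3 - 2 * gold| ≤ 1 / 2 :=
    abs_le.2 ⟨by linarith [gold_lt_seven_quarters], by linarith [three_halves_lt_gold]⟩
  nlinarith [abs_nonneg x]

def expansionSet : Set ℝ :=
  Ico 0 (2 - gold) ∪ Ico (4 - 2 * gold) (2 * gold - 2) ∪ Ico gold 2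

lemma expansionSet_subset_Ico : expansionSet ⊆ Ico 0 2 := by
  have := three_halves_lt_gold
  have := gold_lt_seven_quarters
  rintro y ((⟨h₀, h₁⟩ | ⟨h₀, h₁⟩) | ⟨h₀, h₁⟩) <;> constructor <;> linarith

lemma Rmap_eq_of_mem_expansionSet {y : ℝ} (hy : y ∈ expansionSet) :
    ∃ k : ℤ, 0 ≤ k ∧ k ≤ 2 ∧ Rmap y = gold ^ 3 * y - 2 * k * gold := by
  have := three_halves_lt_gold
  have := gold_lt_seven_quarters
  rcases hy with (⟨_, h₁⟩ | ⟨h₀, h₁⟩) | ⟨h₀, _⟩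
  · exact ⟨0, le_rfl, by norm_num, by simp [Rmap, h₁]⟩
  · refine ⟨1, by norm_num, by norm_num, ?_⟩
    rw [Rmap, if_neg (by linarith), if_neg (by linarith), if_pos h₁]
    ring
  · refine ⟨2, by norm_num, le_rfl, ?_⟩
    rw [Rmap, if_neg (by linarith), if_neg (by linarith), if_neg (by linarith),
      if_neg (by linarith)]
    ring

/-- On the expansion intervals, `R` roughly halves the norm `N(m + nφ) = max |m| |n|`. -/
theorem Rmap_norm_expansion_bound (m n : ℤ)
    (hy : (m : ℝ) + n * gold ∈
      Set.Ico (0 : ℝ) (2 - gold) ∪ Set.Ico (4 - 2 * gold) (2 * gold - 2) ∪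
        Set.Ico gold 2) :
    ∃ m' n' : ℤ, Rmap ((m : ℝ) + n * gold) = m' + n' * gold ∧
      ((max |m'| |n'| : ℤ) : ℝ) < ((max |m| |n| : ℤ) : ℝ) / 2 + 8 := by
  obtain ⟨k, hk₀, hk₂, hR⟩ := Rmap_eq_of_mem_expansionSet hy
  obtain ⟨hy₀, hy₂⟩ := expansionSet_subset_Ico hy
  have hn : |(n : ℝ)| ≤ max |(m : ℝ)| |(n : ℝ)| := le_max_right _ _
  have h₁ := abs_le.1 (abs_mul_two_sub_gold_le n)
  have h₂ := abs_le.1 (abs_mul_three_sub_two_gold_le n)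
  have hk : (0 : ℝ) ≤ k ∧ (k : ℝ) ≤ 2 := ⟨by exact_mod_cast hk₀, by exact_mod_cast hk₂⟩
  refine ⟨m + 2 * n, 2 * m + 3 * n - 2 * k, ?_, ?_⟩
  · rw [hR, gold_pow_three_mul]
    push_cast
    ring
  · push_cast
    apply max_lt <;> rw [abs_lt] <;> constructor <;> linarith
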